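/- arXiv:1808.10494 — 2 statements merged into one kernel-verified Lean document; each statement's English description precedes it below -/
import Mathlib

section
/- Let Ω = (0,1)ⁿ, Q̄ = [0,1]^{n−1} × [0,2], 1 < p < ∞, and for ε ∈ (0,1) let f_ε ∈ C²(Q̄;ℝⁿ) satisfy |∂_1 f_ε| = 1, ∂_1 f_ε ∈ span{e_1, e_n} and ∂_i f_ε = e_i for i = 2, …, n−1. Define the Lipschitz function u_ε : Ω → ℝⁿ by u_ε(x) = f_ε(⟦x⟧_ε) + (x_n − [x_n]_ε) ∂_1 f_ε^⊥(⟦x⟧_ε) for x ∈ εY_stiff ∩ Ω and by linear interpolation in the e_n-direction on εY_soft ∩ Ω. Then for every ε ∈ (0,1), ∫_{εY_stiff ∩ Ω} dist^p(∇u_ε, SO(n)) dx ≤ 2^p ε^p ‖∂²_{11} f_ε‖^p_{L^∞(Q̄;ℝⁿ)}. -/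
open MeasureTheory Filter Topology Set
open scoped ENNReal

noncomputable section

namespace LayeredRigidity

abbrev Vec (n : ℕ) := EuclideanSpace ℝ (Fin n)
abbrev Mat (n : ℕ) := Matrix (Fin n) (Fin n) ℝ

/-- Interpret a plain function `Fin n → ℝ` as an element of Euclidean space. -/
def toVec {n : ℕ} (f : Fin n → ℝ) : Vec n := WithLp.toLp 2 f

/-- The last coordinate `x_n` of a vector. -/
def coordLast {n : ℕ} (x : Vec n) : ℝ :=
  if h : 0 < n then x ⟨n - 1, Nat.sub_lt h Nat.one_pos⟩ else 0

/-- The first coordinate `x_1` of a vector. -/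
def coord0 {n : ℕ} (x : Vec n) : ℝ := if h : 0 < n then x ⟨0, h⟩ else 0

/-- Standard basis vector `e_j`. -/
def bas {n : ℕ} (j : Fin n) : Vec n := EuclideanSpace.single j 1

/-- The last standard basis vector `e_n`, as a plain function. -/
def eL {n : ℕ} : Fin n → ℝ := fun j => if (j : ℕ) + 1 = n then 1 else 0

/-- The last standard basis vector `e_n`. -/
def eLast {n : ℕ} : Vec n := toVec eL

/-- The first standard basis vector `e_1`. -/
def eFirst {n : ℕ} : Vec n := toVec (fun j => if (j : ℕ) = 0 then 1 else 0)

/-- Replace the last coordinate of `x` by `t`. -/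
def setLast {n : ℕ} (x : Vec n) (t : ℝ) : Vec n :=
  toVec (fun j => if (j : ℕ) + 1 = n then t else x j)

/-- Frobenius norm of a matrix. -/
def frob {n : ℕ} (F : Mat n) : ℝ := Real.sqrt (∑ i, ∑ j, (F i j) ^ 2)

/-- The special orthogonal group `SO(n)`, as a set of matrices. -/
def SO (n : ℕ) : Set (Mat n) := {F | F * F.transpose = 1 ∧ F.det = 1}

/-- Frobenius distance of a matrix to `SO(n)`. -/
def distSO {n : ℕ} (F : Mat n) : ℝ := sInf ((fun Q => frob (F - Q)) '' SO n)

/-- Matrix-vector multiplication, landing in Euclidean space. -/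
def matVec {n : ℕ} (A : Mat n) (x : Vec n) : Vec n := toVec (fun i => ∑ j, A i j * x j)

/-- Outer product `v ⊗ w = v wᵀ`. -/
def outerM {n : ℕ} (v w : Fin n → ℝ) : Mat n := Matrix.of fun i j => v i * w j

/-- The `e_n`-directional component of a direction-indexed family (i.e. `v (n-1)`). -/
def lastOf {α : Type*} [AddCommMonoid α] {n : ℕ} (v : Fin n → α) : α :=
  ∑ j : Fin n, if (j : ℕ) + 1 = n then v j else 0

/-- The (periodically extended, `ε`-dilated) stiff layers `ε Y_stiff ⊆ ℝⁿ`. -/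
def stiffLayers {n : ℕ} (lam ε : ℝ) : Set (Vec n) :=
  {x | (⌈coordLast x / ε⌉ : ℝ) - coordLast x / ε ≤ 1 - lam}

/-- The (periodically extended, `ε`-dilated) soft layers `ε Y_soft ⊆ ℝⁿ`. -/
def softLayers {n : ℕ} (lam ε : ℝ) : Set (Vec n) :=
  {x | 1 - lam < (⌈coordLast x / ε⌉ : ℝ) - coordLast x / ε}

/-- One-dimensional stiff layers `ε I_stiff ⊆ ℝ`. -/
def stiff1D (lam ε : ℝ) : Set ℝ := {t | (⌈t / ε⌉ : ℝ) - t / ε ≤ 1 - lam}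

/-- One-dimensional soft layers `ε I_soft ⊆ ℝ`. -/
def soft1D (lam ε : ℝ) : Set ℝ := {t | 1 - lam < (⌈t / ε⌉ : ℝ) - t / ε}

/-- A set is cross-section connected if all its horizontal cross-sections are connected. -/
def CrossSectionConnected {n : ℕ} (Ω : Set (Vec n)) : Prop :=
  ∀ t : ℝ, IsPreconnected {x ∈ Ω | coordLast x = t}

/-- A set is flat if every nonempty horizontal cross-section of its closure has nonempty
relative interior in the corresponding hyperplane. -/
def Flat {n : ℕ} (Ω : Set (Vec n)) : Prop :=
  ∀ t : ℝ, (closure Ω ∩ {x | coordLast x = t}).Nonempty →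
    ∃ x ∈ closure Ω ∩ {x | coordLast x = t}, ∃ r > (0 : ℝ),
      Metric.ball x r ∩ {y | coordLast y = t} ⊆ closure Ω

/-- A Lipschitz domain: an open nonempty set whose boundary is locally, after an isometry of the
ambient space, the graph of a Lipschitz function with the set lying on one side. -/
def IsLipschitzDomain {n : ℕ} (Ω : Set (Vec n)) : Prop :=
  IsOpen Ω ∧ Ω.Nonempty ∧
  ∀ x ∈ frontier Ω, ∃ e : Vec n ≃ᵢ Vec n, ∃ K : NNReal, ∃ f : Vec n → ℝ, ∃ r : ℝ,
    0 < r ∧ LipschitzWith K f ∧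
    ∀ y ∈ Metric.ball x r, (y ∈ Ω ↔ f (setLast (e y) 0) < coordLast (e y))

/-- Componentwise membership in `L^p(Ω)`. -/
def LpFn {n : ℕ} {ι : Type*} (Ω : Set (Vec n)) (p : ℝ) (u : Vec n → ι → ℝ) : Prop :=
  ∀ i, MemLp (fun x => u x i) (ENNReal.ofReal p) (volume.restrict Ω)

/-- `G` is the weak (distributional) derivative of `u` on `Ω`:
integration by parts against smooth compactly supported test functions. -/
def IsWeakDeriv {n : ℕ} {ι : Type*} (Ω : Set (Vec n)) (u : Vec n → ι → ℝ)
    (G : Vec n → ι → Fin n → ℝ) : Prop :=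
  ∀ φ : Vec n → ℝ, ContDiff ℝ (⊤ : ℕ∞) φ → HasCompactSupport φ → tsupport φ ⊆ Ω →
    ∀ i j, ∫ x in Ω, u x i * fderiv ℝ φ x (bas j) = - ∫ x in Ω, G x i j * φ x

/-- Membership in the Sobolev space `W^{1,p}(Ω)`, with explicit weak derivative `G`. -/
def SobolevFn {n : ℕ} {ι : Type*} (Ω : Set (Vec n)) (p : ℝ) (u : Vec n → ι → ℝ)
    (G : Vec n → ι → Fin n → ℝ) : Prop :=
  LpFn Ω p u ∧ LpFn Ω p (fun x (ij : ι × Fin n) => G x ij.1 ij.2) ∧ IsWeakDeriv Ω u G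

/-- `W^{1,p}(Ω;ℝⁿ)` for vector-valued maps, with gradient matrix `Du` (`(Du)_{ij} = ∂_j u_i`). -/
def SobolevVec {n : ℕ} (Ω : Set (Vec n)) (p : ℝ) (u : Vec n → Vec n)
    (Du : Vec n → Mat n) : Prop :=
  SobolevFn Ω p (fun x i => u x i) (fun x i j => Du x i j)

/-- `W^{1,p}(Ω;ℝ^{n×n})` for matrix-valued maps; `DR x j` is the partial derivative `∂_j R`. -/
def SobolevMat {n : ℕ} (Ω : Set (Vec n)) (p : ℝ) (R : Vec n → Mat n)
    (DR : Vec n → Fin n → Mat n) : Prop :=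
  SobolevFn Ω p (fun x (ij : Fin n × Fin n) => R x ij.1 ij.2) (fun x ij j => DR x j ij.1 ij.2)

/-- The conjugate exponent of `p`, as an extended real. -/
def conjE (p : ℝ) : ℝ≥0∞ := if p = 1 then ⊤ else ENNReal.ofReal (p / (p - 1))

/-- Weak convergence in `L^p(Ω)` of a family indexed by `ε > 0`, as `ε → 0`:
testing componentwise against all `L^{p'}` functions. -/
def WeakLpFam {n : ℕ} {ι : Type*} (Ω : Set (Vec n)) (p : ℝ) (f : ℝ → Vec n → ι → ℝ)
    (g : Vec n → ι → ℝ) : Prop :=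
  ∀ φ : Vec n → ℝ, MemLp φ (conjE p) (volume.restrict Ω) →
    ∀ i, Tendsto (fun ε => ∫ x in Ω, f ε x i * φ x) (𝓝[>] (0 : ℝ))
      (𝓝 (∫ x in Ω, g x i * φ x))

/-- Strong convergence in `L^p(Ω)` of a family indexed by `ε > 0`, as `ε → 0`. -/
def StrongLpFam {n : ℕ} {ι : Type*} (Ω : Set (Vec n)) (p : ℝ) (f : ℝ → Vec n → ι → ℝ)
    (g : Vec n → ι → ℝ) : Prop :=
  ∀ i, Tendsto (fun ε => ∫ x in Ω, |f ε x i - g x i| ^ p) (𝓝[>] (0 : ℝ)) (𝓝 0)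

/-- One-dimensional Sobolev space `W^{1,p}(J)` with explicit weak derivative. -/
def Sobolev1D {ι : Type*} (J : Set ℝ) (p : ℝ) (ν ν' : ℝ → ι → ℝ) : Prop :=
  (∀ i, MemLp (fun t => ν t i) (ENNReal.ofReal p) (volume.restrict J)) ∧
  (∀ i, MemLp (fun t => ν' t i) (ENNReal.ofReal p) (volume.restrict J)) ∧
  ∀ φ : ℝ → ℝ, ContDiff ℝ (⊤ : ℕ∞) φ → HasCompactSupport φ → tsupport φ ⊆ J →
    ∀ i, ∫ t in J, ν t i * deriv φ t = - ∫ t in J, ν' t i * φ t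

/-- The open unit cube `(0,1)ⁿ`. -/
def unitCube (n : ℕ) : Set (Vec n) := {x | ∀ i, x i ∈ Set.Ioo (0 : ℝ) 1}

/-- The gradient matrix of a (differentiable) map, `(∇φ)_{ij} = ∂_j φ_i`. -/
def gradMat {n : ℕ} (φ : Vec n → Vec n) (x : Vec n) : Mat n :=
  Matrix.of fun i j => fderiv ℝ φ x (bas j) i

/-- The quasiconvex envelope of `W`, via the infimum over smooth compactly supported
perturbations on the unit cube (which has measure one). -/
def qcEnv {n : ℕ} (W : Mat n → ℝ) (F : Mat n) : ℝ :=
  sInf {v : ℝ | ∃ φ : Vec n → Vec n, ContDiff ℝ (⊤ : ℕ∞) φ ∧ tsupport φ ⊆ unitCube n ∧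
    v = ∫ x in unitCube n, W (F + gradMat φ x)}

/-- The minor of `F` with rows `s` and columns `t`. -/
def minor {n : ℕ} (F : Mat n) (s t : Finset (Fin n)) (h : t.card = s.card) : ℝ :=
  Matrix.det (Matrix.of fun i j : Fin s.card =>
    F (s.orderIsoOfFin rfl i).1 (t.orderIsoOfFin h j).1)

/-- Index type enumerating all minors of an `n × n` matrix. -/
def MinorIdx (n : ℕ) := {q : Finset (Fin n) × Finset (Fin n) // q.2.card = q.1.card}

/-- The vector of all minors of a matrix. -/
def minors {n : ℕ} (F : Mat n) : MinorIdx n → ℝ := fun q => minor F q.1.1 q.1.2 q.2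

/-- A function of matrices is polyconvex if it is a convex function of the vector of minors. -/
def Polyconvex {n : ℕ} (W : Mat n → ℝ) : Prop :=
  ∃ g : (MinorIdx n → ℝ) → ℝ, ConvexOn ℝ Set.univ g ∧ ∀ F, W F = g (minors F)

/-- The set `𝒜` of matrices of the form `R + d ⊗ e_n` with `R ∈ SO(n)`. -/
def Astar (n : ℕ) : Set (Mat n) := {F | ∃ R ∈ SO n, ∃ d : Fin n → ℝ, F = R + outerM d eL}

end LayeredRigidity

namespace LayeredRigidity

/-- `[t]_ε = ε⌈t/ε⌉ - ε + ((1+λ)/2)ε`, the height of the midsection of the closest stiff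
layer lying above. -/
def projT (lam ε t : ℝ) : ℝ := ε * (⌈t / ε⌉ : ℝ) - ε + (1 + lam) / 2 * ε

/-- `⟦x⟧_ε = (x', [x_n]_ε)`, the projection onto the midsection of the stiff layer. -/
def projX {n : ℕ} (lam ε : ℝ) (x : Vec n) : Vec n := setLast x (projT lam ε (coordLast x))

/-- `a^⊥ = (−a_n, a_2, …, a_{n−1}, a_1)`. -/
def perp {n : ℕ} (a : Vec n) : Vec n :=
  toVec fun i =>
    if (i : ℕ) = 0 then -(coordLast a) else if (i : ℕ) + 1 = n then coord0 a else a i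

/-- The partial derivative `∂_1 f` in the direction `e_1`. -/
def d1 {n : ℕ} (f : Vec n → Vec n) (y : Vec n) : Vec n :=
  if h : 0 < n then fderiv ℝ f y (bas ⟨0, h⟩) else 0

/-- The value of the layered construction on the stiff layers:
`f(⟦x⟧_ε) + (x_n − [x_n]_ε) ∂_1 f^⊥(⟦x⟧_ε)`. -/
def stiffVal {n : ℕ} (lam ε : ℝ) (f : Vec n → Vec n) (x : Vec n) : Vec n :=
  f (projX lam ε x) + (coordLast x - projT lam ε (coordLast x)) • perp (d1 f (projX lam ε x))

open Classical in
/-- The layered deformation `u_ε`: given by the bending formula on the stiff layers and by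
linear interpolation in the `e_n`-direction on the soft layers. -/
def layered {n : ℕ} (lam ε : ℝ) (f : Vec n → Vec n) (x : Vec n) : Vec n :=
  if x ∈ stiffLayers lam ε then stiffVal lam ε f x
  else
    (1 - (coordLast x - ε * ((⌈coordLast x / ε⌉ : ℝ) - 1)) / (ε * lam)) •
        stiffVal lam ε f (setLast x (ε * ((⌈coordLast x / ε⌉ : ℝ) - 1))) +
      ((coordLast x - ε * ((⌈coordLast x / ε⌉ : ℝ) - 1)) / (ε * lam)) •
        stiffVal lam ε f (setLast x (ε * ((⌈coordLast x / ε⌉ : ℝ) - 1) + ε * lam))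

/-- The closed box `Q̄ = [0,1]^{n-1} × [0,2]`. -/
def Qbar (n : ℕ) : Set (Vec n) :=
  {x | (∀ i : Fin n, (i : ℕ) + 1 ≠ n → x i ∈ Set.Icc (0 : ℝ) 1) ∧
    coordLast x ∈ Set.Icc (0 : ℝ) 2}

/-- `‖∂²₁₁ f‖_{L^∞(Q̄)}`. -/
def supD11 {n : ℕ} (f : Vec n → Vec n) : ℝ := ⨆ x ∈ Qbar n, ‖d1 (d1 f) x‖

/-- `‖∇² f‖_{L^∞(Q̄)}`. -/
def supD2 {n : ℕ} (f : Vec n → Vec n) : ℝ := ⨆ x ∈ Qbar n, ‖iteratedFDeriv ℝ 2 f x‖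

end LayeredRigidity

/-!
Off the null set of interfaces, a point `x` of a stiff layer has a neighbourhood on which
`u_ε(z) = f(z', t₀) + (z_n - t₀) (∂₁f)^⊥(z', t₀)` with `t₀ = [x_n]_ε` frozen. At `x` the columns
of `∇u_ε` are `∂₁f + s (∂²₁₁f)^⊥`, `e₂, …, e_{n-1}` and `(∂₁f)^⊥`, evaluated at `⟦x⟧_ε`, where
`|s| = |x_n - t₀| ≤ (1 - λ) ε / 2`. The middle columns are exact because `∂_i f = e_i` near
`⟦x⟧_ε` forces `∂_i ∂₁ f = ∂₁ ∂_i f = 0`. As `∂₁f` is a unit vector in `span{e₁, eₙ}`, the matrix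
with columns `∂₁f, e₂, …, e_{n-1}, (∂₁f)^⊥` is a plane rotation, so
`dist(∇u_ε, SO(n)) ≤ |s| |∂²₁₁f| ≤ ε ‖∂²₁₁f‖_∞` almost everywhere on the stiff layers, and the
cube has measure one.
-/

namespace LayeredRigidity

variable {m : ℕ}

section Coordinates

lemma val_add_one_eq_iff_eq_last (i : Fin (m + 2)) :
    (i : ℕ) + 1 = m + 2 ↔ i = Fin.last (m + 1) := by
  rw [Fin.ext_iff, Fin.val_last]; omega

lemma coordLast_eq (x : Vec (m + 2)) : coordLast x = x (Fin.last (m + 1)) := by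
  rw [coordLast, dif_pos (by omega)]; rfl

lemma coord0_eq (x : Vec (m + 2)) : coord0 x = x 0 := by
  rw [coord0, dif_pos (by omega)]; rfl

lemma continuous_coordLast : Continuous (coordLast : Vec (m + 2) → ℝ) := by
  rw [show (coordLast : Vec (m + 2) → ℝ) = _ from funext coordLast_eq]
  exact (EuclideanSpace.proj (𝕜 := ℝ) _).continuous

lemma d1_eq (f : Vec (m + 2) → Vec (m + 2)) (y : Vec (m + 2)) :
    d1 f y = fderiv ℝ f y (bas 0) := by
  rw [d1, dif_pos (by omega)]; rfl

lemma bas_apply {n : ℕ} (j i : Fin n) : bas j i = if i = j then 1 else 0 :=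
  PiLp.single_apply 2 ℝ j 1 i

lemma setLast_apply (x : Vec (m + 2)) (t : ℝ) (j : Fin (m + 2)) :
    setLast x t j = if j = Fin.last (m + 1) then t else x j := by
  simp only [setLast, toVec, val_add_one_eq_iff_eq_last]

lemma perp_apply (a : Vec (m + 2)) (i : Fin (m + 2)) :
    perp a i = if i = 0 then -a (Fin.last (m + 1))
      else if i = Fin.last (m + 1) then a 0 else a i := by
  simp only [perp, toVec, coordLast_eq, coord0_eq, val_add_one_eq_iff_eq_last,
    Fin.val_eq_zero_iff]

lemma zero_ne_last : (0 : Fin (m + 2)) ≠ Fin.last (m + 1) := Fin.last_pos'.ne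

lemma norm_perp (a : Vec (m + 2)) : ‖perp a‖ = ‖a‖ := by
  have hswap : ∀ i, perp a i ^ 2 = a (Equiv.swap 0 (Fin.last (m + 1)) i) ^ 2 := by
    intro i
    rw [perp_apply]
    split_ifs with h0 hl
    · rw [h0, Equiv.swap_apply_left, neg_sq]
    · rw [hl, Equiv.swap_apply_right]
    · rw [Equiv.swap_apply_of_ne_of_ne h0 hl]
  rw [← sq_eq_sq₀ (norm_nonneg _) (norm_nonneg _), EuclideanSpace.real_norm_sq_eq,
    EuclideanSpace.real_norm_sq_eq, Finset.sum_congr rfl fun i _ => hswap i]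
  exact Equiv.sum_comp _ fun i => a i ^ 2

def perpIsometry : Vec (m + 2) →ₗᵢ[ℝ] Vec (m + 2) where
  toFun := perp
  map_add' a b := by
    ext i; simp only [PiLp.add_apply, perp_apply]; split_ifs <;> ring
  map_smul' c a := by
    ext i; simp only [PiLp.smul_apply, perp_apply, smul_eq_mul, RingHom.id_apply]
    split_ifs <;> ring
  norm_map' := norm_perp

lemma perpIsometry_apply (a : Vec (m + 2)) : perpIsometry a = perp a := rfl

lemma perp_zero : perp (0 : Vec (m + 2)) = 0 := map_zero perpIsometry

def dropLast : Vec (m + 2) →L[ℝ] Vec (m + 2) :=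
  ContinuousLinearMap.id ℝ _ -
    (EuclideanSpace.proj (Fin.last (m + 1))).smulRight (bas (Fin.last (m + 1)))

lemma dropLast_apply (z : Vec (m + 2)) (j : Fin (m + 2)) :
    dropLast z j = if j = Fin.last (m + 1) then 0 else z j := by
  simp only [dropLast, sub_apply, ContinuousLinearMap.id_apply,
    ContinuousLinearMap.smulRight_apply, PiLp.proj_apply, PiLp.sub_apply, PiLp.smul_apply,
    bas_apply, smul_eq_mul, mul_ite, mul_one, mul_zero]
  split_ifs with h <;> simp [h]

lemma dropLast_bas (j : Fin (m + 2)) :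
    dropLast (bas j) = if j = Fin.last (m + 1) then 0 else bas j := by
  ext i
  rw [dropLast_apply]
  split_ifs with hi hj hj
  · rfl
  · rw [bas_apply, if_neg (by rintro rfl; exact hj hi)]
  · subst hj; rw [bas_apply, if_neg hi]; rfl
  · rfl

lemma hasFDerivAt_setLast (t : ℝ) (x : Vec (m + 2)) :
    HasFDerivAt (fun z => setLast z t) dropLast x := by
  have h : (fun z => setLast z t) = fun z => dropLast z + t • bas (Fin.last (m + 1)) := by
    ext z j
    simp only [setLast_apply, PiLp.add_apply, dropLast_apply, PiLp.smul_apply, bas_apply]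
    split_ifs <;> simp
  rw [h]
  exact dropLast.hasFDerivAt.add_const _

end Coordinates

section PlaneRotation

def planeRot (a b : ℝ) : Mat (m + 2) := Matrix.of fun i j =>
  if j = 0 then (if i = 0 then a else if i = Fin.last (m + 1) then b else 0)
  else if j = Fin.last (m + 1) then
    (if i = 0 then -b else if i = Fin.last (m + 1) then a else 0)
  else if i = j then 1 else 0

def planeRotIndex : Fin 2 ⊕ Fin m ≃ Fin (m + 2) :=
  (finSumFinEquiv.trans (finCongr (Nat.add_comm 2 m))).trans
    (Equiv.swap ⟨1, by omega⟩ (Fin.last (m + 1)))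

lemma planeRotIndex_inl_zero : planeRotIndex (m := m) (Sum.inl 0) = 0 := by
  show Equiv.swap (⟨1, by omega⟩ : Fin (m + 2)) (Fin.last (m + 1)) ⟨0, by omega⟩ = 0
  exact Equiv.swap_apply_of_ne_of_ne (by simp) (by simp [Fin.ext_iff])

lemma planeRotIndex_inl_one : planeRotIndex (m := m) (Sum.inl 1) = Fin.last (m + 1) := by
  show Equiv.swap (⟨1, by omega⟩ : Fin (m + 2)) (Fin.last (m + 1)) ⟨1, by omega⟩ = _
  exact Equiv.swap_apply_left _ _

lemma planeRotIndex_inr (k : Fin m) :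
    planeRotIndex (Sum.inr k) ≠ 0 ∧ planeRotIndex (Sum.inr k) ≠ Fin.last (m + 1) := by
  have hk := k.2
  show Equiv.swap _ _ (⟨2 + k, by omega⟩ : Fin (m + 2)) ≠ 0 ∧
    Equiv.swap _ _ (⟨2 + k, by omega⟩ : Fin (m + 2)) ≠ _
  rcases eq_or_ne (⟨2 + k, by omega⟩ : Fin (m + 2)) (Fin.last (m + 1)) with h | h
  · rw [h, Equiv.swap_apply_right]
    simp only [ne_eq, Fin.ext_iff, Fin.val_zero, Fin.val_last]; omega
  · rw [Equiv.swap_apply_of_ne_of_ne (by simp [Fin.ext_iff]; omega) h]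
    exact ⟨by simp [Fin.ext_iff], h⟩

lemma planeRot_reindex (a b : ℝ) :
    (planeRot a b).submatrix planeRotIndex planeRotIndex =
      Matrix.fromBlocks !![a, -b; b, a] 0 0 (1 : Matrix (Fin m) (Fin m) ℝ) := by
  have hne (i : Fin 2) (k : Fin m) : planeRotIndex (Sum.inl i) ≠ planeRotIndex (Sum.inr k) :=
    planeRotIndex.injective.ne (by simp)
  ext i j
  rcases i with i | i <;> rcases j with j | j
  · fin_cases i <;> fin_cases j <;>
      simp [planeRot, planeRotIndex_inl_zero, planeRotIndex_inl_one, zero_ne_last.symm]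
  · obtain ⟨h0, hl⟩ := planeRotIndex_inr j
    simp [planeRot, h0, hl, hne]
  · obtain ⟨h0, hl⟩ := planeRotIndex_inr i
    fin_cases j <;>
      simp [planeRot, h0, hl, planeRotIndex_inl_zero, planeRotIndex_inl_one]
  · obtain ⟨h0, hl⟩ := planeRotIndex_inr j
    simp [planeRot, h0, hl, Matrix.one_apply, planeRotIndex.injective.eq_iff]

lemma planeRot_mem_SO {a b : ℝ} (hab : a ^ 2 + b ^ 2 = 1) :
    planeRot (m := m) a b ∈ SO (m + 2) := by
  set e := planeRotIndex (m := m)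
  have hA : !![a, -b; b, a] * !![a, -b; b, a].transpose = 1 := by
    ext i j
    fin_cases i <;> fin_cases j <;>
      simp only [Fin.zero_eta, Fin.mk_one, Fin.isValue, Matrix.mul_apply, Matrix.of_apply,
        Matrix.cons_val', Matrix.cons_val_fin_one, Matrix.cons_val_zero, Matrix.cons_val_one,
        Matrix.transpose_apply, Fin.sum_univ_two, Matrix.one_apply_eq, Matrix.one_apply_ne, ne_eq,
        zero_ne_one, one_ne_zero, not_false_eq_true] <;> nlinarith
  constructor
  · have h : (planeRot a b * (planeRot a b).transpose).submatrix e e = 1 := by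
      rw [← Matrix.submatrix_mul_equiv _ _ _ e, ← Matrix.transpose_submatrix, planeRot_reindex,
        Matrix.fromBlocks_transpose, Matrix.fromBlocks_multiply]
      simp [hA, Matrix.fromBlocks_one]
    simpa [Matrix.submatrix_submatrix] using congrArg (·.submatrix e.symm e.symm) h
  · rw [← Matrix.det_submatrix_equiv_self e, planeRot_reindex, Matrix.det_fromBlocks_zero₂₁,
      Matrix.det_fin_two_of, Matrix.det_one, mul_one]
    linear_combination hab

end PlaneRotation

section DistanceToSO

lemma distSO_nonneg {n : ℕ} (F : Mat n) : 0 ≤ distSO F :=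
  Real.sInf_nonneg (by rintro _ ⟨Q, _, rfl⟩; exact Real.sqrt_nonneg _)

lemma distSO_le_frob_sub {n : ℕ} (F : Mat n) {R : Mat n} (hR : R ∈ SO n) :
    distSO F ≤ frob (F - R) :=
  csInf_le ⟨0, by rintro _ ⟨Q, _, rfl⟩; exact Real.sqrt_nonneg _⟩ ⟨R, hR, rfl⟩

lemma frob_of_single_column {n : ℕ} {F : Mat n} {j₀ : Fin n} {w : Vec n}
    (hF : ∀ i j, F i j = if j = j₀ then w i else 0) : frob F = ‖w‖ := by
  rw [frob, EuclideanSpace.norm_eq]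
  congr 1
  refine Finset.sum_congr rfl fun i _ => ?_
  simp [hF, sq_abs]

lemma planeRot_eq_columns {v : Vec (m + 2)}
    (hv : ∀ i, i ≠ 0 → i ≠ Fin.last (m + 1) → v i = 0) (i j : Fin (m + 2)) :
    planeRot (v 0) (v (Fin.last (m + 1))) i j =
      (if j = 0 then v else if j = Fin.last (m + 1) then perp v else bas j) i := by
  simp only [planeRot, Matrix.of_apply]
  split_ifs <;> simp_all [perp_apply, bas_apply, zero_ne_last.symm]

lemma distSO_le_of_columns {F : Mat (m + 2)} {v w : Vec (m + 2)} (hv : ‖v‖ = 1)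
    (hv_plane : ∀ i, i ≠ 0 → i ≠ Fin.last (m + 1) → v i = 0)
    (hF : ∀ i j, F i j =
      (if j = 0 then v + w else if j = Fin.last (m + 1) then perp v else bas j) i) :
    distSO F ≤ ‖w‖ := by
  have hab : v 0 ^ 2 + v (Fin.last (m + 1)) ^ 2 = 1 := by
    rw [← Fintype.sum_eq_add (f := fun i => v i ^ 2) _ _ zero_ne_last
      fun i hi => by simp [hv_plane i hi.1 hi.2], ← EuclideanSpace.real_norm_sq_eq, hv, one_pow]
  calc distSO F ≤ frob (F - planeRot (v 0) (v (Fin.last (m + 1)))) :=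
        distSO_le_frob_sub F (planeRot_mem_SO hab)
    _ = ‖w‖ := frob_of_single_column (j₀ := 0) fun i j => by
        rw [Matrix.sub_apply, hF, planeRot_eq_columns hv_plane]
        split_ifs <;> simp

end DistanceToSO

section SecondDerivatives

lemma contDiff_d1 {k : WithTop ℕ∞} {f : Vec (m + 2) → Vec (m + 2)}
    (hf : ContDiff ℝ (k + 1) f) :
    ContDiff ℝ k (d1 f) := by
  rw [show d1 f = fun z => fderiv ℝ f z (bas 0) from funext (d1_eq f)]
  exact (hf.fderiv_right le_rfl).clm_apply contDiff_const

lemma fderiv_fderiv_apply_comm {n : ℕ} {f : Vec n → Vec n} (hf : ContDiff ℝ 2 f)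
    (y u v : Vec n) :
    fderiv ℝ (fun z => fderiv ℝ f z u) y v = fderiv ℝ (fun z => fderiv ℝ f z v) y u := by
  have hdf : DifferentiableAt ℝ (fderiv ℝ f) y :=
    (hf.fderiv_right (m := 1) (by norm_num)).differentiable one_ne_zero y
  have happly (w : Vec n) : fderiv ℝ (fun z => fderiv ℝ f z w) y =
      (ContinuousLinearMap.apply ℝ (Vec n) w).comp (fderiv ℝ (fderiv ℝ f) y) :=
    ((ContinuousLinearMap.apply ℝ (Vec n) w).hasFDerivAt.comp y hdf.hasFDerivAt).fderiv
  simp only [happly, ContinuousLinearMap.comp_apply, ContinuousLinearMap.apply_apply]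
  exact hf.contDiffAt.isSymmSndFDerivAt (by simp) v u

lemma fderiv_d1_apply_eq_zero {f : Vec (m + 2) → Vec (m + 2)} (hf : ContDiff ℝ 2 f)
    {y u c : Vec (m + 2)} (hu : ∀ᶠ z in 𝓝 y, fderiv ℝ f z u = c) :
    fderiv ℝ (d1 f) y u = 0 := by
  rw [show d1 f = fun z => fderiv ℝ f z (bas 0) from funext (d1_eq f),
    fderiv_fderiv_apply_comm hf, Filter.EventuallyEq.fderiv_eq (f := fun _ => c) hu]
  simp

end SecondDerivatives

section LayerGeometry

variable {lam ε t : ℝ}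

def layerInterfaces (lam ε : ℝ) : Set ℝ :=
  Set.range (fun k : ℤ => ε * k) ∪ Set.range (fun k : ℤ => ε * (k - (1 - lam)))

lemma countable_layerInterfaces : (layerInterfaces lam ε).Countable :=
  (Set.countable_range _).union (Set.countable_range _)

lemma abs_sub_projT_le (hε : 0 < ε) (ht : t ∈ stiff1D lam ε) :
    |t - projT lam ε t| ≤ (1 - lam) / 2 * ε := by
  have hceil := Int.le_ceil (t / ε)
  have ht' : (⌈t / ε⌉ : ℝ) - t / ε ≤ 1 - lam := ht
  have hdiff : t - projT lam ε t = ε * (t / ε - ⌈t / ε⌉ + (1 - lam) / 2) := by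
    rw [projT]; field_simp; ring
  rw [hdiff, abs_mul, abs_of_pos hε, mul_comm]
  gcongr
  rw [abs_le]; constructor <;> linarith

lemma projT_mem_Ioo (hlam : lam ∈ Ioo 0 1) (hε : ε ∈ Ioo 0 1) (ht : t ∈ Ioo 0 1)
    (hst : t ∈ stiff1D lam ε) : projT lam ε t ∈ Ioo 0 2 := by
  obtain ⟨hlam0, hlam1⟩ := hlam
  obtain ⟨hε0, hε1⟩ := hε
  have hk : (1 : ℝ) ≤ ⌈t / ε⌉ := by
    have : 0 < ⌈t / ε⌉ := Int.ceil_pos.mpr (div_pos ht.1 hε0)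
    exact_mod_cast this
  have hclose := (abs_le.mp (abs_sub_projT_le hε0 hst)).1
  constructor
  · rw [projT]; nlinarith
  · nlinarith [ht.2]

lemma eventually_stiff1D_and_projT_eq (hε : 0 < ε) (hlam : 0 ≤ lam) (ht : t ∈ stiff1D lam ε)
    (hint : t ∉ layerInterfaces lam ε) :
    ∀ᶠ s in 𝓝 t, s ∈ stiff1D lam ε ∧ projT lam ε s = projT lam ε t := by
  set k := ⌈t / ε⌉ with hk
  have hk_ne : t ≠ ε * k := fun h => hint (Or.inl ⟨k, h.symm⟩)
  have hk_ne' : t ≠ ε * (k - (1 - lam)) := fun h => hint (Or.inr ⟨k, h.symm⟩)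
  have hle : t ≤ ε * k := by
    rw [mul_comm, ← div_le_iff₀ hε]; exact Int.le_ceil _
  have hge : ε * (k - (1 - lam)) ≤ t := by
    rw [mul_comm, ← le_div_iff₀ hε]; linarith [show (k : ℝ) - t / ε ≤ 1 - lam from ht]
  filter_upwards [Ioo_mem_nhds (hge.lt_of_ne hk_ne'.symm) (hle.lt_of_ne hk_ne)] with s hs
  have hs1 : (k : ℝ) - (1 - lam) < s / ε := by rw [lt_div_iff₀ hε]; linarith [hs.1]
  have hs2 : s / ε < k := by rw [div_lt_iff₀ hε]; linarith [hs.2]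
  have hceil : ⌈s / ε⌉ = k := Int.ceil_eq_iff.mpr ⟨by linarith, hs2.le⟩
  refine ⟨?_, ?_⟩
  · show (⌈s / ε⌉ : ℝ) - s / ε ≤ 1 - lam
    rw [hceil]; linarith
  · rw [projT, projT, hceil]

end LayerGeometry

section Bending

/-- `stiffVal` with the midsection height frozen at `t₀`; the two agree on the interior of the
stiff layer whose midsection lies at height `t₀`. -/
def bend {n : ℕ} (f : Vec n → Vec n) (t₀ : ℝ) (z : Vec n) : Vec n :=
  f (setLast z t₀) + (coordLast z - t₀) • perp (d1 f (setLast z t₀))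

lemma stiffVal_eq_bend {n : ℕ} (lam ε : ℝ) (f : Vec n → Vec n) (z : Vec n) :
    stiffVal lam ε f z = bend f (projT lam ε (coordLast z)) z := rfl

lemma fderiv_bend_apply_bas {f : Vec (m + 2) → Vec (m + 2)} {t₀ : ℝ} {x : Vec (m + 2)}
    (hf : DifferentiableAt ℝ f (setLast x t₀))
    (hdf : DifferentiableAt ℝ (d1 f) (setLast x t₀)) (j : Fin (m + 2)) :
    fderiv ℝ (bend f t₀) x (bas j) =
      if j = Fin.last (m + 1) then perp (d1 f (setLast x t₀))
      else fderiv ℝ f (setLast x t₀) (bas j) +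
        (coordLast x - t₀) • perp (fderiv ℝ (d1 f) (setLast x t₀) (bas j)) := by
  have hσ := hasFDerivAt_setLast t₀ x
  have hlast : HasFDerivAt (fun z : Vec (m + 2) => coordLast z - t₀)
      (EuclideanSpace.proj (𝕜 := ℝ) (Fin.last (m + 1))) x := by
    simp only [coordLast_eq]
    exact (EuclideanSpace.proj (𝕜 := ℝ) _).hasFDerivAt.sub_const t₀
  have hperp :=
    perpIsometry.toContinuousLinearMap.hasFDerivAt.comp x (hdf.hasFDerivAt.comp x hσ)
  have hbend : HasFDerivAt (bend f t₀) _ x := (hf.hasFDerivAt.comp x hσ).add (hlast.smul hperp)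
  rw [hbend.fderiv]
  by_cases hj : j = Fin.last (m + 1)
  · simp [hj, dropLast_bas, bas_apply]
  · simp [hj, dropLast_bas, bas_apply, Ne.symm hj, perpIsometry_apply]

end Bending

section LayeredMap

variable {lam ε : ℝ} {f : Vec (m + 2) → Vec (m + 2)} {x : Vec (m + 2)}

lemma layered_eventuallyEq_bend (hε : 0 < ε) (hlam : 0 ≤ lam) (hx : x ∈ stiffLayers lam ε)
    (hint : coordLast x ∉ layerInterfaces lam ε) :
    layered lam ε f =ᶠ[𝓝 x] bend f (projT lam ε (coordLast x)) := by
  filter_upwards [(continuous_coordLast.tendsto x).eventually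
    (eventually_stiff1D_and_projT_eq hε hlam hx hint)] with z ⟨hz, hproj⟩
  rw [layered, if_pos (show z ∈ stiffLayers lam ε from hz), stiffVal_eq_bend, hproj]

lemma Qbar_mem_nhds_setLast (hx : x ∈ unitCube (m + 2)) {t : ℝ} (ht : t ∈ Ioo 0 2) :
    Qbar (m + 2) ∈ 𝓝 (setLast x t) := by
  let O : Set (Vec (m + 2)) :=
    ⋂ i, (fun z => z i) ⁻¹' Ioo 0 (if i = Fin.last (m + 1) then 2 else 1)
  have hO : IsOpen O := isOpen_iInter_of_finite fun i =>
    isOpen_Ioo.preimage (EuclideanSpace.proj (𝕜 := ℝ) i).continuous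
  refine Filter.mem_of_superset (hO.mem_nhds ?_) fun z hz => ?_
  · simp only [O, mem_iInter, mem_preimage, setLast_apply]
    intro i; split_ifs
    · exact ht
    · exact hx i
  · simp only [O, mem_iInter, mem_preimage] at hz
    refine ⟨fun i hi => ?_, ?_⟩
    · have := hz i
      rw [if_neg ((val_add_one_eq_iff_eq_last i).not.mp hi)] at this
      exact Ioo_subset_Icc_self this
    · have := hz (Fin.last (m + 1))
      rw [if_pos rfl] at this
      rw [coordLast_eq]; exact Ioo_subset_Icc_self this

lemma fderiv_layered_apply_bas (hf : ContDiff ℝ 2 f)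
    (hmid : ∀ y ∈ Qbar (m + 2), ∀ i, i ≠ 0 → i ≠ Fin.last (m + 1) →
      fderiv ℝ f y (bas i) = bas i)
    (hε : 0 < ε) (hlam : 0 ≤ lam) (hx : x ∈ stiffLayers lam ε)
    (hint : coordLast x ∉ layerInterfaces lam ε) (hQ : Qbar (m + 2) ∈ 𝓝 (projX lam ε x))
    (j : Fin (m + 2)) :
    fderiv ℝ (layered lam ε f) x (bas j) =
      if j = 0 then d1 f (projX lam ε x) +
          (coordLast x - projT lam ε (coordLast x)) • perp (d1 (d1 f) (projX lam ε x))
      else if j = Fin.last (m + 1) then perp (d1 f (projX lam ε x)) else bas j := by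
  have hdf := hf.differentiable two_ne_zero
  have hdd1f := (contDiff_d1 (k := 1) hf).differentiable one_ne_zero
  rw [(layered_eventuallyEq_bend hε hlam hx hint).fderiv_eq,
    fderiv_bend_apply_bas (hdf _) (hdd1f _) j]
  split_ifs with hl h0 h0
  · exact absurd (h0.symm.trans hl) zero_ne_last
  · rfl
  · rw [h0, ← d1_eq, ← d1_eq]; rfl
  · have hmid_near : ∀ᶠ z in 𝓝 (projX lam ε x), fderiv ℝ f z (bas j) = bas j :=
      Filter.mem_of_superset hQ fun z hz => hmid z hz j h0 hl
    rw [projX] at hQ hmid_near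
    rw [hmid _ (mem_of_mem_nhds hQ) j h0 hl, fderiv_d1_apply_eq_zero hf hmid_near, perp_zero,
      smul_zero, add_zero]

end LayeredMap

section SupBound

lemma isCompact_Qbar : IsCompact (Qbar (m + 2)) := by
  have hQ : Qbar (m + 2) = PiLp.homeomorph 2 (fun _ : Fin (m + 2) => ℝ) ⁻¹'
      Set.pi univ fun i => Icc 0 (if i = Fin.last (m + 1) then 2 else 1) := by
    ext z
    show _ ∧ _ ↔ ∀ i ∈ univ, z i ∈ _
    simp only [coordLast_eq, mem_univ, true_implies]
    constructor
    · rintro ⟨hz, hzn⟩ i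
      split_ifs with hi
      · subst hi; exact hzn
      · exact hz i ((val_add_one_eq_iff_eq_last i).not.mpr hi)
    · intro hz
      refine ⟨fun i hi => ?_, by simpa using hz (Fin.last (m + 1))⟩
      simpa [(val_add_one_eq_iff_eq_last i).not.mp hi] using hz i
  rw [hQ, Homeomorph.isCompact_preimage]
  exact isCompact_univ_pi fun _ => isCompact_Icc

lemma norm_d1_d1_le_supD11 {f : Vec (m + 2) → Vec (m + 2)} (hf : ContDiff ℝ 2 f)
    {y : Vec (m + 2)} (hy : y ∈ Qbar (m + 2)) : ‖d1 (d1 f) y‖ ≤ supD11 f := by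
  have hcont : Continuous fun z => ‖d1 (d1 f) z‖ :=
    (contDiff_d1 (k := 0) (contDiff_d1 (k := 1) hf)).continuous.norm
  refine le_ciSup₂ (f := fun z (_ : z ∈ Qbar (m + 2)) => ‖d1 (d1 f) z‖) ?_ y hy
  refine (isCompact_Qbar.bddAbove_image hcont.continuousOn).mono ?_
  rintro _ ⟨_, ⟨z, rfl⟩, ⟨hz, rfl⟩⟩
  exact ⟨z, hz, rfl⟩

lemma supD11_nonneg (f : Vec (m + 2) → Vec (m + 2)) : 0 ≤ supD11 f :=
  Real.iSup_nonneg fun _ => Real.iSup_nonneg fun _ => norm_nonneg _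

end SupBound

lemma distSO_gradMat_layered_le {lam ε : ℝ} {f : Vec (m + 2) → Vec (m + 2)} {x : Vec (m + 2)}
    (hf : ContDiff ℝ 2 f) (harc : ∀ y ∈ Qbar (m + 2), ‖d1 f y‖ = 1)
    (hspan : ∀ y ∈ Qbar (m + 2), ∀ i, i ≠ 0 → i ≠ Fin.last (m + 1) → d1 f y i = 0)
    (hmid : ∀ y ∈ Qbar (m + 2), ∀ i, i ≠ 0 → i ≠ Fin.last (m + 1) →
      fderiv ℝ f y (bas i) = bas i)
    (hlam : lam ∈ Ioo 0 1) (hε : ε ∈ Ioo 0 1) (hx : x ∈ stiffLayers lam ε ∩ unitCube (m + 2))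
    (hint : coordLast x ∉ layerInterfaces lam ε) :
    distSO (gradMat (layered lam ε f) x) ≤ (1 - lam) / 2 * ε * supD11 f := by
  have hxn : coordLast x ∈ Ioo 0 1 := by rw [coordLast_eq]; exact hx.2 _
  have hQ := Qbar_mem_nhds_setLast hx.2 (projT_mem_Ioo hlam hε hxn hx.1)
  have hy : projX lam ε x ∈ Qbar (m + 2) := mem_of_mem_nhds hQ
  calc distSO (gradMat (layered lam ε f) x)
      ≤ ‖(coordLast x - projT lam ε (coordLast x)) • perp (d1 (d1 f) (projX lam ε x))‖ :=
        distSO_le_of_columns (harc _ hy) (hspan _ hy) fun i j => by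
          rw [gradMat, Matrix.of_apply,
            fderiv_layered_apply_bas hf hmid hε.1 hlam.1.le hx.1 hint hQ]
    _ = |coordLast x - projT lam ε (coordLast x)| * ‖d1 (d1 f) (projX lam ε x)‖ := by
        rw [norm_smul, norm_perp, Real.norm_eq_abs]
    _ ≤ (1 - lam) / 2 * ε * supD11 f := by
        gcongr
        · exact mul_nonneg (by linarith [hlam.2]) hε.1.le
        · exact abs_sub_projT_le hε.1 hx.1
        · exact norm_d1_d1_le_supD11 hf hy

section Measure

lemma volume_coord_preimage_eq_zero {n : ℕ} (i : Fin n) {B : Set ℝ} (hB : volume B = 0) :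
    volume {x : Vec n | x i ∈ B} = 0 := by
  rw [show {x : Vec n | x i ∈ B} =
      (MeasurableEquiv.toLp 2 (Fin n → ℝ)).symm ⁻¹' (Function.eval i ⁻¹' B) from rfl,
    (EuclideanSpace.volume_preserving_symm_measurableEquiv_toLp (Fin n)).measure_preimage_equiv,
    volume_pi]
  exact Measure.pi_eval_preimage_null _ hB

lemma volume_unitCube {n : ℕ} : volume (unitCube n) = 1 := by
  rw [show unitCube n = (MeasurableEquiv.toLp 2 (Fin n → ℝ)).symm ⁻¹'
      (Set.pi univ fun _ => Ioo 0 1) from by ext x; simp [unitCube],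
    (EuclideanSpace.volume_preserving_symm_measurableEquiv_toLp (Fin n)).measure_preimage_equiv,
    volume_pi_pi]
  simp

lemma measurableSet_unitCube {n : ℕ} : MeasurableSet (unitCube n) := by
  have : unitCube n = ⋂ i, (fun x : Vec n => x i) ⁻¹' Ioo 0 1 := by ext x; simp [unitCube]
  rw [this]
  exact MeasurableSet.iInter fun i =>
    measurableSet_Ioo.preimage (EuclideanSpace.proj (𝕜 := ℝ) i).continuous.measurable

lemma measurableSet_stiffLayers (lam ε : ℝ) :
    MeasurableSet (stiffLayers lam ε : Set (Vec (m + 2))) := by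
  have hq : Measurable fun x : Vec (m + 2) => coordLast x / ε :=
    continuous_coordLast.measurable.div_const ε
  exact measurableSet_le
    (((measurable_of_countable _).comp (Int.measurable_ceil.comp hq)).sub hq) measurable_const

lemma setLIntegral_le_of_ae_le {X : Type*} [MeasurableSpace X] {μ : Measure X} {s : Set X}
    {g : X → ℝ≥0∞} {c : ℝ≥0∞} (hs : μ s ≤ 1) (hg : ∀ᵐ x ∂μ.restrict s, g x ≤ c) :
    ∫⁻ x in s, g x ∂μ ≤ c :=
  calc ∫⁻ x in s, g x ∂μ ≤ ∫⁻ _ in s, c ∂μ := lintegral_mono_ae hg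
    _ = c * μ s := setLIntegral_const s c
    _ ≤ c := mul_le_of_le_one_right' hs

end Measure

lemma ae_distSO_gradMat_layered_le {lam ε : ℝ} {f : Vec (m + 2) → Vec (m + 2)}
    (hf : ContDiff ℝ 2 f) (harc : ∀ y ∈ Qbar (m + 2), ‖d1 f y‖ = 1)
    (hspan : ∀ y ∈ Qbar (m + 2), ∀ i, i ≠ 0 → i ≠ Fin.last (m + 1) → d1 f y i = 0)
    (hmid : ∀ y ∈ Qbar (m + 2), ∀ i, i ≠ 0 → i ≠ Fin.last (m + 1) →
      fderiv ℝ f y (bas i) = bas i)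
    (hlam : lam ∈ Ioo 0 1) (hε : ε ∈ Ioo 0 1) :
    ∀ᵐ x ∂volume.restrict (stiffLayers lam ε ∩ unitCube (m + 2)),
      distSO (gradMat (layered lam ε f) x) ≤ (1 - lam) / 2 * ε * supD11 f := by
  have hgeneric : ∀ᵐ x : Vec (m + 2), coordLast x ∉ layerInterfaces lam ε := by
    rw [ae_iff]
    simp only [not_not, coordLast_eq]
    exact volume_coord_preimage_eq_zero _ (countable_layerInterfaces.measure_zero _)
  filter_upwards [ae_restrict_of_ae hgeneric,
    ae_restrict_mem ((measurableSet_stiffLayers lam ε).inter measurableSet_unitCube)]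
    with x hint hx
  exact distSO_gradMat_layered_le hf harc hspan hmid hlam hε hx hint

/-- Lemma 2.1, energy estimate: for the layered construction `u_ε` built
from `f_ε ∈ C²(Q̄;ℝⁿ)` with `|∂_1 f_ε| = 1`, `∂_1 f_ε ∈ span{e_1,e_n}` and `∂_i f_ε = e_i`
for `i = 2,…,n-1`, the stiff-layer elastic energy satisfies
`∫_{εY_stiff ∩ Ω} dist^p(∇u_ε, SO(n)) dx ≤ 2^p ε^p ‖∂²₁₁ f_ε‖^p_{L^∞(Q̄)}`. -/
theorem statement5 {n : ℕ} (hn : 2 ≤ n) (lam : ℝ) (hlam : lam ∈ Set.Ioo (0 : ℝ) 1)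
    (p : ℝ) (hp : 1 < p) (ε : ℝ) (hε : ε ∈ Set.Ioo (0 : ℝ) 1)
    (f : Vec n → Vec n) (hf : ContDiff ℝ 2 f)
    (harc : ∀ x ∈ Qbar n, ‖d1 f x‖ = 1)
    (hspan : ∀ x ∈ Qbar n, ∀ i : Fin n, (i : ℕ) ≠ 0 → (i : ℕ) + 1 ≠ n → d1 f x i = 0)
    (hmid : ∀ x ∈ Qbar n, ∀ i : Fin n, 0 < (i : ℕ) → (i : ℕ) + 1 < n →
      fderiv ℝ f x (bas i) = bas i) :
    ∫⁻ x in stiffLayers lam ε ∩ unitCube n,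
        ENNReal.ofReal (distSO (gradMat (layered lam ε f) x) ^ p) ≤
      ENNReal.ofReal (2 ^ p * ε ^ p * supD11 f ^ p) := by
  obtain ⟨m, rfl⟩ : ∃ m, n = m + 2 := ⟨n - 2, by omega⟩
  have hspan' : ∀ y ∈ Qbar (m + 2), ∀ i, i ≠ 0 → i ≠ Fin.last (m + 1) → d1 f y i = 0 :=
    fun y hy i h0 hl => hspan y hy i (Fin.val_ne_zero_iff.mpr h0)
      ((val_add_one_eq_iff_eq_last i).not.mpr hl)
  have hmid' : ∀ y ∈ Qbar (m + 2), ∀ i, i ≠ 0 → i ≠ Fin.last (m + 1) →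
      fderiv ℝ f y (bas i) = bas i :=
    fun y hy i h0 hl => hmid y hy i (Fin.pos_iff_ne_zero.mpr h0)
      (by have := (val_add_one_eq_iff_eq_last i).not.mpr hl; omega)
  have hM := supD11_nonneg f
  have hsharp : (1 - lam) / 2 * ε * supD11 f ≤ ε * supD11 f := by
    gcongr; nlinarith [hlam.1, hε.1]
  calc ∫⁻ x in stiffLayers lam ε ∩ unitCube (m + 2),
        ENNReal.ofReal (distSO (gradMat (layered lam ε f) x) ^ p)
      ≤ ENNReal.ofReal ((ε * supD11 f) ^ p) := by
        refine setLIntegral_le_of_ae_le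
          ((measure_mono inter_subset_right).trans volume_unitCube.le) ?_
        filter_upwards [ae_distSO_gradMat_layered_le hf harc hspan' hmid' hlam hε] with x hx
        gcongr
        exacts [distSO_nonneg _, hx.trans hsharp]
    _ ≤ ENNReal.ofReal (2 ^ p * ε ^ p * supD11 f ^ p) := by
        rw [Real.mul_rpow hε.1.le hM, mul_assoc]
        exact ENNReal.ofReal_le_ofReal <| le_mul_of_one_le_left
          (mul_nonneg (Real.rpow_nonneg hε.1.le p) (Real.rpow_nonneg hM p))
          (Real.one_le_rpow one_le_two (by linarith))

end LayeredRigidity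
end
end

section
/- Let n ≥ 2 and R, Q ∈ SO(n). Then |R e_n − Q e_n| ≤ Σ_{i=1}^{n−1} |R e_i − Q e_i|, where e_1, …, e_n are the standard unit vectors and |·| is the Euclidean norm on ℝⁿ. -/
open MeasureTheory Filter Topology Set
open scoped ENNReal

noncomputable section

/-! In a positively oriented orthonormal frame `u`, each vector is the cross product of the
others: `⟪u m, y⟫ = ω (update u m y)` for the volume form `ω`. Pairing `u m - w m` with its unit
direction `x` thus gives `‖u m - w m‖ = ω (update u m x) - ω (update w m x)`, a difference of
`ω` at two families that agree in slot `m` and consist of vectors of norm at most one.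
Telescoping slot by slot and Hadamard's inequality `|ω v| ≤ ∏ ‖v i‖` bound the step in slot `i`
by `‖u i - w i‖`. -/

namespace ContinuousAlternatingMap

variable {𝕜 E F ι : Type*} [NontriviallyNormedField 𝕜] [SeminormedAddCommGroup E]
  [NormedSpace 𝕜 E] [SeminormedAddCommGroup F] [NormedSpace 𝕜 F] [Fintype ι]

theorem norm_image_sub_le_sum_of_norm_le_one (f : E [⋀^ι]→L[𝕜] F) (hf : ‖f‖ ≤ 1)
    {a b : ι → E} (ha : ∀ i, ‖a i‖ ≤ 1) (hb : ∀ i, ‖b i‖ ≤ 1) :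
    ‖f a - f b‖ ≤ ∑ i, ‖a i - b i‖ := by
  classical
  have hterm : ∀ i, (∏ j, if j = i then ‖a i - b i‖ else max ‖a j‖ ‖b j‖) ≤ ‖a i - b i‖ := by
    intro i
    rw [← Finset.mul_prod_erase _ _ (Finset.mem_univ i), if_pos rfl]
    refine mul_le_of_le_one_right (norm_nonneg _)
      (Finset.prod_le_one (fun j _ => ?_) fun j hj => ?_)
    · split_ifs <;> positivity
    · rw [if_neg (Finset.ne_of_mem_erase hj)]
      exact max_le (ha j) (hb j)
  calc ‖f a - f b‖ ≤ ‖f‖ * ∑ i, ∏ j, if j = i then ‖a i - b i‖ else max ‖a j‖ ‖b j‖ :=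
        f.norm_image_sub_le' a b
    _ ≤ ‖f‖ * ∑ i, ‖a i - b i‖ := by gcongr with i; exact hterm i
    _ ≤ ∑ i, ‖a i - b i‖ := mul_le_of_le_one_left (by positivity) hf

end ContinuousAlternatingMap

namespace Orientation

open Module

variable {E : Type*} [NormedAddCommGroup E] [InnerProductSpace ℝ E] {n : ℕ}
  [Fact (finrank ℝ E = n)] (o : Orientation ℝ E (Fin n))

open Function in
theorem volumeForm_update_eq_inner {v : Fin n → E} (hv : Orthonormal ℝ v)
    (hvo : o.volumeForm v = 1) (m : Fin n) (y : E) :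
    o.volumeForm (update v m y) = inner ℝ (v m) y := by
  have : Nonempty (Fin n) := ⟨m⟩
  let B := basisOfOrthonormalOfCardEqFinrank hv (by simp [Fact.out (p := finrank ℝ E = n)])
  have hB : ⇑B = v := coe_basisOfOrthonormalOfCardEqFinrank _ _
  suffices o.volumeForm.toMultilinearMap.toLinearMap v m = innerₛₗ ℝ (v m) from
    LinearMap.congr_fun this y
  refine B.ext fun i => ?_
  rw [hB]
  rcases eq_or_ne i m with rfl | him
  · simp [hvo, hv.1 i]
  · simp [o.volumeForm.map_update_self v him.symm, hv.2 him.symm]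

theorem abs_volumeForm_sub_le_sum {a b : Fin n → E} (ha : ∀ i, ‖a i‖ ≤ 1)
    (hb : ∀ i, ‖b i‖ ≤ 1) :
    |o.volumeForm a - o.volumeForm b| ≤ ∑ i, ‖a i - b i‖ := by
  have hbound : ∀ v : Fin n → E, ‖o.volumeForm v‖ ≤ 1 * ∏ i, ‖v i‖ := fun v => by
    simpa using o.abs_volumeForm_apply_le v
  let ω := o.volumeForm.mkContinuous 1 hbound
  exact ω.norm_image_sub_le_sum_of_norm_le_one (ω.opNorm_le_bound zero_le_one hbound) ha hb

open Function in
theorem norm_sub_le_sum_erase_norm_sub {u w : Fin n → E} (hu : Orthonormal ℝ u)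
    (hw : Orthonormal ℝ w) (huo : o.volumeForm u = 1) (hwo : o.volumeForm w = 1) (m : Fin n) :
    ‖u m - w m‖ ≤ ∑ i ∈ Finset.univ.erase m, ‖u i - w i‖ := by
  set d := u m - w m
  -- `x = 0` when `d = 0`, and `⟪d, x⟫ = ‖d‖` still holds
  set x := ‖d‖⁻¹ • d
  have hx : ‖x‖ ≤ 1 := by
    rw [norm_smul, norm_inv, norm_norm]
    exact inv_mul_le_one_of_le₀ le_rfl (norm_nonneg _)
  have hdx : inner ℝ d x = ‖d‖ := by
    rw [real_inner_smul_right, real_inner_self_eq_norm_sq]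
    rcases eq_or_ne ‖d‖ 0 with h | h
    · simp [h]
    · field_simp
  have hle : ∀ {v : Fin n → E}, Orthonormal ℝ v → ∀ i, ‖update v m x i‖ ≤ 1 := fun hv i => by
    rcases eq_or_ne i m with rfl | hi
    · simpa using hx
    · simp [update_of_ne hi, hv.1 i]
  calc ‖d‖ = o.volumeForm (update u m x) - o.volumeForm (update w m x) := by
        rw [o.volumeForm_update_eq_inner hu huo, o.volumeForm_update_eq_inner hw hwo,
          ← inner_sub_left, hdx]
    _ ≤ |o.volumeForm (update u m x) - o.volumeForm (update w m x)| := le_abs_self _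
    _ ≤ ∑ i, ‖update u m x i - update w m x i‖ := o.abs_volumeForm_sub_le_sum (hle hu) (hle hw)
    _ = ∑ i ∈ Finset.univ.erase m, ‖u i - w i‖ := by
        rw [← Finset.add_sum_erase _ _ (Finset.mem_univ m)]
        simp only [update_self, sub_self, norm_zero, zero_add]
        exact Finset.sum_congr rfl fun i hi => by
          rw [update_of_ne (Finset.ne_of_mem_erase hi), update_of_ne (Finset.ne_of_mem_erase hi)]

end Orientation

namespace LayeredRigidity

section

open Module
open scoped Matrix

theorem orthonormal_toVec_transpose {n : ℕ} {A : Mat n} (h : Aᵀ * A = 1) :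
    Orthonormal ℝ fun j => toVec (Aᵀ j) := by
  rw [orthonormal_iff_ite]
  intro i j
  simpa [toVec, PiLp.inner_apply, Matrix.mul_apply, Matrix.one_apply, mul_comm] using
    congrFun (congrFun h i) j

theorem basisFun_det_toVec_transpose {n : ℕ} (A : Mat n) :
    (EuclideanSpace.basisFun (Fin n) ℝ).toBasis.det (fun j => toVec (Aᵀ j)) = A.det := by
  rw [Module.Basis.det_apply]
  congr 1

theorem norm_toVec_transpose_sub {n : ℕ} (A B : Mat n) (i : Fin n) :
    ‖toVec (Aᵀ i) - toVec (Bᵀ i)‖ = √(∑ k, (A k i - B k i) ^ 2) := by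
  simp [toVec, ← WithLp.toLp_sub, EuclideanSpace.norm_eq]

theorem norm_col_sub_le_sum_erase_of_mem_SO {n : ℕ} {R Q : Mat n} (hR : R ∈ SO n)
    (hQ : Q ∈ SO n) (m : Fin n) :
    ‖toVec (Rᵀ m) - toVec (Qᵀ m)‖ ≤ ∑ i ∈ Finset.univ.erase m, ‖toVec (Rᵀ i) - toVec (Qᵀ i)‖ := by
  have : Fact (finrank ℝ (Vec n) = n) := ⟨finrank_euclideanSpace_fin⟩
  let b := EuclideanSpace.basisFun (Fin n) ℝ
  let o := b.toBasis.orientation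
  have hvol : o.volumeForm = b.toBasis.det := o.volumeForm_robust b rfl
  have hvol1 : ∀ {A : Mat n}, A ∈ SO n → o.volumeForm (fun j => toVec (Aᵀ j)) = 1 :=
    fun hA => by rw [hvol, basisFun_det_toVec_transpose, hA.2]
  exact o.norm_sub_le_sum_erase_norm_sub
    (orthonormal_toVec_transpose (mul_eq_one_comm.mp hR.1))
    (orthonormal_toVec_transpose (mul_eq_one_comm.mp hQ.1)) (hvol1 hR) (hvol1 hQ) m

end

/-- from Remark 5.3 c: for rotations `R, Q ∈ SO(n)`,
`|R e_n − Q e_n| ≤ Σ_{i=1}^{n−1} |R e_i − Q e_i|` (Euclidean norms of the columns). -/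
theorem statement16 {n : ℕ} (hn : 2 ≤ n) (R Q : Mat n) (hR : R ∈ SO n) (hQ : Q ∈ SO n) :
    Real.sqrt (∑ k, (R k ⟨n - 1, by omega⟩ - Q k ⟨n - 1, by omega⟩) ^ 2) ≤
      ∑ i ∈ Finset.univ.filter (fun i : Fin n => (i : ℕ) < n - 1),
        Real.sqrt (∑ k, (R k i - Q k i) ^ 2) := by
  have hfilter : Finset.univ.filter (fun i : Fin n => (i : ℕ) < n - 1) =
      Finset.univ.erase ⟨n - 1, by omega⟩ := by
    ext i
    simp only [Finset.mem_filter, Finset.mem_univ, true_and, Finset.mem_erase, ne_eq, Fin.ext_iff,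
      and_true]
    omega
  rw [hfilter]
  simpa only [norm_toVec_transpose_sub] using
    norm_col_sub_le_sum_erase_of_mem_SO hR hQ ⟨n - 1, by omega⟩

end LayeredRigidity
end
end
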